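/- arXiv:2602.08845 — 2 statements merged into one kernel-verified Lean document; each statement's English description precedes it below -/
import Mathlib

section
/- (Proposition 2, Conclusion A) Suppose (q_l, q_r, θ̃_l, θ̃_r) : [0,∞) → (ℝⁿ)⁴ is a solution (q_i twice continuously differentiable, θ̃_i continuously differentiable) of the closed-loop equations M_i(q_i) q̈_i + C_i(q_i, q̇_i) q̇_i = f_i(t) − K_s ⌈q_i − q_j⌋^{p_U} + K_{ci} ⌈θ̃_i⌋^{p_U} and θ̃̇_i = −(K_{ci}/D_{ci})^{1/p_F} ⌈θ̃_i⌋^{r₂/r₁} − q̇_i for (i,j) ∈ {(l,r),(r,l)}, where the external forces f_i : [0,∞) → ℝⁿ are continuous and satisfy the passivity assumption A1 along the solution. Then the position error q_l − q_r, the velocities q̇_l, q̇_r, and the controller errors θ̃_l, θ̃_r are bounded on [0,∞). -/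
/-!
The total energy `½ vₗᵀMₗvₗ + ½ vᵣᵀMᵣvᵣ + K_s Φ(qₗ - qᵣ) + K_cl Φ(θ̃ₗ) + K_cr Φ(θ̃ᵣ)`, with
`Φ(x) = ∑ |x_k|^(p_U+1) / (p_U+1)`, has derivative `vₗ ⬝ fₗ + vᵣ ⬝ fᵣ` minus a nonnegative
dissipation in `θ̃`: Property P3 removes the Coriolis terms, the spring forces cancel against the
derivative of the coupling potential, and the `-q̇` in the controller dynamics cancels the
controller force. Integrating and using A1 bounds the energy by its initial value plus `κₗ + κᵣ`,
and the lower bound `m₁` of A2 turns this into bounds on every state variable.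
-/

open Matrix intervalIntegral

/-- Signed power function: `⌈x⌋^p = |x|^p · sign(x)` with `sign 0 = 0`. -/
noncomputable def spow (p x : ℝ) : ℝ := |x| ^ p * Real.sign x

theorem spow_neg (p x : ℝ) : spow p (-x) = -spow p x := by
  simp [spow, Real.sign_neg]

theorem spow_mul_spow_nonneg (p q x : ℝ) : 0 ≤ spow p x * spow q x := by
  have : spow p x * spow q x = |x| ^ p * |x| ^ q * (Real.sign x * Real.sign x) := by
    simp only [spow]; ring
  rw [this]
  have := mul_self_nonneg (Real.sign x)
  positivity

theorem hasDerivAt_abs_rpow_eq_spow {p : ℝ} (hp : 1 < p) (x : ℝ) :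
    HasDerivAt (fun y : ℝ => |y| ^ p) (p * spow (p - 1) x) x := by
  refine (hasDerivAt_abs_rpow x hp).congr_deriv ?_
  rcases lt_trichotomy x 0 with h | rfl | h
  · rw [spow, Real.sign_of_neg h, show p - 1 = (p - 2) + 1 by ring,
      Real.rpow_add (abs_pos.2 h.ne), Real.rpow_one, abs_of_neg h]
    ring
  · simp [spow]
  · rw [spow, Real.sign_of_pos h, show p - 1 = (p - 2) + 1 by ring,
      Real.rpow_add (abs_pos.2 h.ne'), Real.rpow_one, abs_of_pos h]
    ring

theorem le_add_of_hasDerivAt_le_of_integral_le {E g : ℝ → ℝ} {κ : ℝ}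
    (hE : ∀ t, 0 ≤ t → ∃ e, HasDerivAt E e t ∧ e ≤ g t) (hg : ContinuousOn g (Set.Ici 0))
    (hκ : ∀ t, 0 ≤ t → ∫ s in (0 : ℝ)..t, g s ≤ κ) {t : ℝ} (ht : 0 ≤ t) : E t ≤ E 0 + κ := by
  have hE' : ∀ s, 0 ≤ s → HasDerivAt E (deriv E s) s ∧ deriv E s ≤ g s := fun s hs => by
    obtain ⟨e, he, hle⟩ := hE s hs
    exact he.deriv ▸ ⟨he, hle⟩
  have := intervalIntegral.sub_le_integral_of_hasDeriv_right_of_le ht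
    (HasDerivAt.continuousOn fun s hs => (hE' s hs.1).1)
    (fun s hs => (hE' s hs.1.le).1.hasDerivWithinAt)
    ((hg.mono Set.Icc_subset_Ici_self).integrableOn_Icc) (fun s hs => (hE' s hs.1.le).2)
  linarith [hκ t ht]

section Vectors

variable {ι : Type*} [Fintype ι]

theorem HasDerivAt.dotProduct {u w : ℝ → ι → ℝ} {u' w' : ι → ℝ} {t : ℝ}
    (hu : HasDerivAt u u' t) (hw : HasDerivAt w w' t) :
    HasDerivAt (fun s => u s ⬝ᵥ w s) (u' ⬝ᵥ w t + u t ⬝ᵥ w') t := by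
  refine (HasDerivAt.fun_sum (u := Finset.univ) fun i _ =>
    (hasDerivAt_pi.1 hu i).fun_mul (hasDerivAt_pi.1 hw i)).congr_deriv ?_
  rw [Finset.sum_add_distrib]
  rfl

theorem HasDerivAt.mulVec {A : ℝ → Matrix ι ι ℝ} {A' : Matrix ι ι ℝ} {w : ℝ → ι → ℝ}
    {w' : ι → ℝ} {t : ℝ} (hA : ∀ i j, HasDerivAt (fun s => A s i j) (A' i j) t)
    (hw : HasDerivAt w w' t) :
    HasDerivAt (fun s => A s *ᵥ w s) (A' *ᵥ w t + A t *ᵥ w') t :=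
  hasDerivAt_pi.2 fun i => HasDerivAt.dotProduct (hasDerivAt_pi.2 (hA i)) hw

theorem dotProduct_mulVec_self_eq_zero {S : Matrix ι ι ℝ} (hS : Sᵀ = -S) (v : ι → ℝ) :
    v ⬝ᵥ (S *ᵥ v) = 0 := by
  have h : v ⬝ᵥ (S *ᵥ v) = -(v ⬝ᵥ (S *ᵥ v)) := by
    conv_lhs => rw [dotProduct_mulVec, ← mulVec_transpose, hS, dotProduct_comm]
    rw [neg_mulVec, dotProduct_neg]
  linarith

theorem dotProduct_mulVec_comm_of_symm {M : Matrix ι ι ℝ} (hM : Mᵀ = M) (u v : ι → ℝ) :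
    u ⬝ᵥ (M *ᵥ v) = v ⬝ᵥ (M *ᵥ u) := by
  rw [dotProduct_mulVec, ← mulVec_transpose, hM, dotProduct_comm]

theorem fderiv_apply_eq_sum [DecidableEq ι] (f : (ι → ℝ) → ℝ) (q v : ι → ℝ) :
    fderiv ℝ f q v = ∑ k, v k * fderiv ℝ f q (Pi.single k 1) := by
  conv_lhs => rw [pi_eq_sum_univ' v]
  simp [map_sum]

theorem norm_le_sqrt_of_mul_dotProduct_self_le {m A : ℝ} (hm : 0 < m) {x : ι → ℝ}
    (h : m * (x ⬝ᵥ x) ≤ A) : ‖x‖ ≤ √(A / m) := by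
  have hdot : x ⬝ᵥ x ≤ A / m := by rw [le_div_iff₀ hm]; linarith
  refine (pi_norm_le_iff_of_nonneg (Real.sqrt_nonneg _)).2 fun k => ?_
  refine Real.abs_le_sqrt (le_trans ?_ hdot)
  rw [sq]
  exact Finset.single_le_sum (f := fun j => x j * x j) (fun j _ => mul_self_nonneg _)
    (Finset.mem_univ k)

noncomputable def powerPotential (p : ℝ) (x : ι → ℝ) : ℝ := ∑ k, |x k| ^ (p + 1) / (p + 1)

theorem powerPotential_nonneg {p : ℝ} (hp : 0 < p + 1) (x : ι → ℝ) : 0 ≤ powerPotential p x :=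
  Finset.sum_nonneg fun k _ => by have := abs_nonneg (x k); positivity

theorem hasDerivAt_powerPotential {p t : ℝ} (hp : 0 < p) {x : ℝ → ι → ℝ} {x' : ι → ℝ}
    (hx : HasDerivAt x x' t) :
    HasDerivAt (fun s => powerPotential p (x s)) (∑ k, spow p (x t k) * x' k) t := by
  refine HasDerivAt.fun_sum fun k _ => ?_
  have := ((hasDerivAt_abs_rpow_eq_spow (by linarith : 1 < p + 1) (x t k)).comp t
    (hasDerivAt_pi.1 hx k)).div_const (p + 1)
  refine this.congr_deriv ?_
  rw [add_sub_cancel_right]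
  field_simp

theorem norm_le_of_mul_powerPotential_le {p c A : ℝ} (hp : 0 < p + 1) (hc : 0 < c)
    {x : ι → ℝ} (h : c * powerPotential p x ≤ A) :
    ‖x‖ ≤ (A * (p + 1) / c) ^ (p + 1)⁻¹ := by
  have hP : powerPotential p x ≤ A / c := by rw [le_div_iff₀ hc]; linarith
  have hsum : ∑ k, |x k| ^ (p + 1) ≤ A * (p + 1) / c := by
    have : ∑ k, |x k| ^ (p + 1) = powerPotential p x * (p + 1) := by
      rw [powerPotential, Finset.sum_mul]
      exact Finset.sum_congr rfl fun k _ => by field_simp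
    rw [this, mul_div_right_comm]
    exact mul_le_mul_of_nonneg_right hP hp.le
  have hA : 0 ≤ A * (p + 1) / c := (Finset.sum_nonneg fun k _ => by positivity).trans hsum
  refine (pi_norm_le_iff_of_nonneg (by positivity)).2 fun k => ?_
  rw [Real.norm_eq_abs, Real.le_rpow_inv_iff_of_pos (abs_nonneg _) hA hp]
  exact (Finset.single_le_sum (f := fun j => |x j| ^ (p + 1))
    (fun j _ => by positivity) (Finset.mem_univ k)).trans hsum

theorem hasDerivAt_kineticEnergy [DecidableEq ι]
    {M : (ι → ℝ) → Matrix ι ι ℝ} {C : (ι → ℝ) → (ι → ℝ) → Matrix ι ι ℝ}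
    (hM_diff : ∀ a b : ι, Differentiable ℝ fun q => M q a b) (hM_symm : ∀ q, (M q)ᵀ = M q)
    (hP3 : ∀ q v : ι → ℝ, ∀ a b : ι,
      ((∑ k, v k * fderiv ℝ (fun q' => M q' a b) q (Pi.single k 1)) - 2 * C q v a b)
        = -((∑ k, v k * fderiv ℝ (fun q' => M q' b a) q (Pi.single k 1)) - 2 * C q v b a))
    {q v acc : ℝ → ι → ℝ} {t : ℝ} (hq : HasDerivAt q (v t) t) (hv : HasDerivAt v (acc t) t) :
    HasDerivAt (fun s => v s ⬝ᵥ (M (q s) *ᵥ v s))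
      (2 * (v t ⬝ᵥ (M (q t) *ᵥ acc t + C (q t) (v t) *ᵥ v t))) t := by
  set Mdot : Matrix ι ι ℝ := of fun a b => fderiv ℝ (fun q' => M q' a b) (q t) (v t)
  have hMdot : ∀ a b, HasDerivAt (fun s => M (q s) a b) (Mdot a b) t := fun a b =>
    (hM_diff a b (q t)).hasFDerivAt.comp_hasDerivAt t hq
  have hskew : (Mdot - (2 : ℝ) • C (q t) (v t))ᵀ = -(Mdot - (2 : ℝ) • C (q t) (v t)) := by
    ext a b
    have := hP3 (q t) (v t) b a
    simp only [← fderiv_apply_eq_sum] at this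
    simpa [Mdot] using this
  have hMdot_C : v t ⬝ᵥ (Mdot *ᵥ v t) = 2 * (v t ⬝ᵥ (C (q t) (v t) *ᵥ v t)) := by
    have := dotProduct_mulVec_self_eq_zero hskew (v t)
    rw [sub_mulVec, smul_mulVec, dotProduct_sub, dotProduct_smul, smul_eq_mul] at this
    linarith
  refine (HasDerivAt.dotProduct hv (HasDerivAt.mulVec hMdot hv)).congr_deriv ?_
  rw [dotProduct_mulVec_comm_of_symm (hM_symm _), dotProduct_add, hMdot_C, dotProduct_add]
  ring

theorem hasDerivAt_manipulatorControllerEnergy [DecidableEq ι]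
    {M : (ι → ℝ) → Matrix ι ι ℝ} {C : (ι → ℝ) → (ι → ℝ) → Matrix ι ι ℝ}
    (hM_diff : ∀ a b : ι, Differentiable ℝ fun q => M q a b) (hM_symm : ∀ q, (M q)ᵀ = M q)
    (hP3 : ∀ q v : ι → ℝ, ∀ a b : ι,
      ((∑ k, v k * fderiv ℝ (fun q' => M q' a b) q (Pi.single k 1)) - 2 * C q v a b)
        = -((∑ k, v k * fderiv ℝ (fun q' => M q' b a) q (Pi.single k 1)) - 2 * C q v b a))
    {p ρ Ks Kc c t : ℝ} (hp : 0 < p) {q v acc θ : ℝ → ι → ℝ} {f q' : ι → ℝ}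
    (hq : HasDerivAt q (v t) t) (hv : HasDerivAt v (acc t) t)
    (hθ : HasDerivAt θ (fun k => -(c * spow ρ (θ t k)) - v t k) t)
    (heq : M (q t) *ᵥ acc t + C (q t) (v t) *ᵥ v t
      = fun k => f k - Ks * spow p (q t k - q' k) + Kc * spow p (θ t k)) :
    HasDerivAt (fun s => v s ⬝ᵥ (M (q s) *ᵥ v s) / 2 + Kc * powerPotential p (θ s))
      (v t ⬝ᵥ f - Ks * ∑ k, v t k * spow p (q t k - q' k)
        - Kc * c * ∑ k, spow p (θ t k) * spow ρ (θ t k)) t := by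
  refine (((hasDerivAt_kineticEnergy hM_diff hM_symm hP3 hq hv).div_const 2).add
    ((hasDerivAt_powerPotential hp hθ).const_mul Kc)).congr_deriv ?_
  rw [heq]
  simp only [dotProduct, Finset.mul_sum, Finset.sum_div, ← Finset.sum_sub_distrib,
    ← Finset.sum_add_distrib]
  exact Finset.sum_congr rfl fun k _ => by ring

theorem mul_sum_spow_mul_spow_nonneg {Kc c : ℝ} (hKc : 0 ≤ Kc) (hc : 0 ≤ c) (p ρ : ℝ)
    (θ : ι → ℝ) : 0 ≤ Kc * c * ∑ k, spow p (θ k) * spow ρ (θ k) :=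
  mul_nonneg (mul_nonneg hKc hc) (Finset.sum_nonneg fun _ _ => spow_mul_spow_nonneg _ _ _)

/-- The spring forces `∓K_s ⌈qₗ - qᵣ⌋^p` are exactly compensated by the coupling potential. -/
theorem exists_hasDerivAt_coupledEnergy_le {Sl Sr : ℝ → ℝ} {ql qr : ℝ → ι → ℝ}
    {vl vr fl fr : ι → ℝ} {p Ks Dl Dr t : ℝ} (hp : 0 < p)
    (hql : HasDerivAt ql vl t) (hqr : HasDerivAt qr vr t)
    (hSl : HasDerivAt Sl (vl ⬝ᵥ fl - Ks * ∑ k, vl k * spow p (ql t k - qr t k) - Dl) t)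
    (hSr : HasDerivAt Sr (vr ⬝ᵥ fr - Ks * ∑ k, vr k * spow p (qr t k - ql t k) - Dr) t)
    (hDl : 0 ≤ Dl) (hDr : 0 ≤ Dr) :
    ∃ e, HasDerivAt (fun s => Sl s + Sr s + Ks * powerPotential p (ql s - qr s)) e t
      ∧ e ≤ vl ⬝ᵥ fl + vr ⬝ᵥ fr := by
  refine ⟨_, (hSl.add hSr).add ((hasDerivAt_powerPotential hp (hql.sub hqr)).const_mul Ks), ?_⟩
  have hcoupling : ∑ k, spow p (ql t k - qr t k) * (vl k - vr k)
      = ∑ k, vl k * spow p (ql t k - qr t k) + ∑ k, vr k * spow p (qr t k - ql t k) := by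
    rw [← Finset.sum_add_distrib]
    refine Finset.sum_congr rfl fun k _ => ?_
    rw [← neg_sub, spow_neg]
    ring
  simp only [Pi.sub_apply, hcoupling]
  linarith

theorem exists_norm_le_of_energy_le {m p Ks Kl Kr : ℝ} (hm : 0 < m) (hp : 0 < p + 1)
    (hKs : 0 < Ks) (hKl : 0 < Kl) (hKr : 0 < Kr) (K : ℝ) :
    ∃ B, ∀ (vl vr θl θr δ : ι → ℝ) (Tl Tr : ℝ), m * (vl ⬝ᵥ vl) ≤ Tl → m * (vr ⬝ᵥ vr) ≤ Tr →
      Tl / 2 + Kl * powerPotential p θl + (Tr / 2 + Kr * powerPotential p θr)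
        + Ks * powerPotential p δ ≤ K →
      ‖δ‖ ≤ B ∧ ‖vl‖ ≤ B ∧ ‖vr‖ ≤ B ∧ ‖θl‖ ≤ B ∧ ‖θr‖ ≤ B := by
  set b : ℝ → ℝ := fun c => (K * (p + 1) / c) ^ (p + 1)⁻¹
  refine ⟨max √(2 * K / m) (max (b Ks) (max (b Kl) (b Kr))),
    fun vl vr θl θr δ Tl Tr hTl hTr hE => ?_⟩
  have hdot : ∀ x : ι → ℝ, 0 ≤ m * (x ⬝ᵥ x) := fun x =>
    mul_nonneg hm.le (Finset.sum_nonneg fun k _ => mul_self_nonneg (x k))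
  have hpot : ∀ c, 0 < c → ∀ x : ι → ℝ, 0 ≤ c * powerPotential p x := fun c hc x =>
    mul_nonneg hc.le (powerPotential_nonneg hp x)
  have := hpot Ks hKs δ; have := hpot Kl hKl θl; have := hpot Kr hKr θr
  have := hdot vl; have := hdot vr
  refine ⟨(norm_le_of_mul_powerPotential_le hp hKs (by linarith)).trans ?_,
    (norm_le_sqrt_of_mul_dotProduct_self_le hm (by linarith : _ ≤ 2 * K)).trans ?_,
    (norm_le_sqrt_of_mul_dotProduct_self_le hm (by linarith : _ ≤ 2 * K)).trans ?_,
    (norm_le_of_mul_powerPotential_le hp hKl (by linarith)).trans ?_,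
    (norm_le_of_mul_powerPotential_le hp hKr (by linarith)).trans ?_⟩ <;> simp [b]

end Vectors

theorem stmt9_general (n : ℕ)
    (Ml Mr : (Fin n → ℝ) → Matrix (Fin n) (Fin n) ℝ)
    (Cl Cr : (Fin n → ℝ) → (Fin n → ℝ) → Matrix (Fin n) (Fin n) ℝ)
    -- Assumption A2
    (m1 m2 : ℝ) (hm1 : 0 < m1)
    (hMl_diff : ∀ a b : Fin n, ContDiff ℝ 1 fun q => Ml q a b)
    (hMr_diff : ∀ a b : Fin n, ContDiff ℝ 1 fun q => Mr q a b)
    (hMl_symm : ∀ q, (Ml q)ᵀ = Ml q) (hMr_symm : ∀ q, (Mr q)ᵀ = Mr q)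
    (hMl_bnd : ∀ q x : Fin n → ℝ,
      m1 * (x ⬝ᵥ x) ≤ x ⬝ᵥ (Ml q *ᵥ x) ∧ x ⬝ᵥ (Ml q *ᵥ x) ≤ m2 * (x ⬝ᵥ x))
    (hMr_bnd : ∀ q x : Fin n → ℝ,
      m1 * (x ⬝ᵥ x) ≤ x ⬝ᵥ (Mr q *ᵥ x) ∧ x ⬝ᵥ (Mr q *ᵥ x) ≤ m2 * (x ⬝ᵥ x))
    -- Property P3
    (hP3l : ∀ q v : Fin n → ℝ, ∀ a b : Fin n,
      ((∑ k, v k * fderiv ℝ (fun q' => Ml q' a b) q (Pi.single k 1)) - 2 * Cl q v a b)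
        = -((∑ k, v k * fderiv ℝ (fun q' => Ml q' b a) q (Pi.single k 1)) - 2 * Cl q v b a))
    (hP3r : ∀ q v : Fin n → ℝ, ∀ a b : Fin n,
      ((∑ k, v k * fderiv ℝ (fun q' => Mr q' a b) q (Pi.single k 1)) - 2 * Cr q v a b)
        = -((∑ k, v k * fderiv ℝ (fun q' => Mr q' b a) q (Pi.single k 1)) - 2 * Cr q v b a))
    -- homogeneity weights and control gains
    (r1 r2 : ℝ) (hr2 : 0 < r2) (hr12 : r2 < r1) (hr1 : r1 < 2 * r2)
    (pU pF : ℝ) (hpU : pU = (2 * r2 - r1) / r1)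
    (Ks Kcl Kcr Dcl Dcr : ℝ) (hKs : 0 < Ks)
    (hKcl : 0 < Kcl) (hKcr : 0 < Kcr) (hDcl : 0 < Dcl) (hDcr : 0 < Dcr)
    -- a solution on [0,∞)
    (ql qr vl vr al ar θl θr : ℝ → (Fin n → ℝ))
    (hql : ∀ t : ℝ, 0 ≤ t → HasDerivAt ql (vl t) t)
    (hqr : ∀ t : ℝ, 0 ≤ t → HasDerivAt qr (vr t) t)
    (hvl : ∀ t : ℝ, 0 ≤ t → HasDerivAt vl (al t) t)
    (hvr : ∀ t : ℝ, 0 ≤ t → HasDerivAt vr (ar t) t)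
    -- controller error dynamics
    (hθl : ∀ t : ℝ, 0 ≤ t → HasDerivAt θl
      (fun k => -((Kcl / Dcl) ^ (1 / pF) * spow (r2 / r1) (θl t k)) - vl t k) t)
    (hθr : ∀ t : ℝ, 0 ≤ t → HasDerivAt θr
      (fun k => -((Kcr / Dcr) ^ (1 / pF) * spow (r2 / r1) (θr t k)) - vr t k) t)
    -- continuous external forces satisfying Assumption A1 along the solution
    (fl fr : ℝ → (Fin n → ℝ)) (hfl : Continuous fl) (hfr : Continuous fr)
    (κl κr : ℝ)
    (hA1l : ∀ t : ℝ, 0 ≤ t → (∫ σ in (0:ℝ)..t, vl σ ⬝ᵥ fl σ) ≤ κl)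
    (hA1r : ∀ t : ℝ, 0 ≤ t → (∫ σ in (0:ℝ)..t, vr σ ⬝ᵥ fr σ) ≤ κr)
    -- the closed-loop equations
    (heql : ∀ t : ℝ, 0 ≤ t →
      Ml (ql t) *ᵥ al t + Cl (ql t) (vl t) *ᵥ vl t
        = fun k => fl t k - Ks * spow pU (ql t k - qr t k) + Kcl * spow pU (θl t k))
    (heqr : ∀ t : ℝ, 0 ≤ t →
      Mr (qr t) *ᵥ ar t + Cr (qr t) (vr t) *ᵥ vr t
        = fun k => fr t k - Ks * spow pU (qr t k - ql t k) + Kcr * spow pU (θr t k)) :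
    ∃ B : ℝ, ∀ t : ℝ, 0 ≤ t →
      ‖ql t - qr t‖ ≤ B ∧ ‖vl t‖ ≤ B ∧ ‖vr t‖ ≤ B ∧ ‖θl t‖ ≤ B ∧ ‖θr t‖ ≤ B := by
  have hpU_pos : 0 < pU := by rw [hpU]; exact div_pos (by linarith) (by linarith)
  set E : ℝ → ℝ := fun s =>
    (vl s ⬝ᵥ (Ml (ql s) *ᵥ vl s) / 2 + Kcl * powerPotential pU (θl s))
      + (vr s ⬝ᵥ (Mr (qr s) *ᵥ vr s) / 2 + Kcr * powerPotential pU (θr s))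
      + Ks * powerPotential pU (ql s - qr s)
  have hE_deriv : ∀ t, 0 ≤ t → ∃ e, HasDerivAt E e t ∧ e ≤ vl t ⬝ᵥ fl t + vr t ⬝ᵥ fr t :=
    fun t ht => exists_hasDerivAt_coupledEnergy_le hpU_pos (hql t ht) (hqr t ht)
      (hasDerivAt_manipulatorControllerEnergy
        (fun a b => (hMl_diff a b).differentiable one_ne_zero)
        hMl_symm hP3l hpU_pos (hql t ht) (hvl t ht) (hθl t ht) (heql t ht))
      (hasDerivAt_manipulatorControllerEnergy
        (fun a b => (hMr_diff a b).differentiable one_ne_zero)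
        hMr_symm hP3r hpU_pos (hqr t ht) (hvr t ht) (hθr t ht) (heqr t ht))
      (mul_sum_spow_mul_spow_nonneg hKcl.le (Real.rpow_nonneg (div_pos hKcl hDcl).le _) _ _ _)
      (mul_sum_spow_mul_spow_nonneg hKcr.le (Real.rpow_nonneg (div_pos hKcr hDcr).le _) _ _ _)
  have hvl_cont := HasDerivAt.continuousOn fun s (hs : s ∈ Set.Ici 0) => hvl s hs
  have hvr_cont := HasDerivAt.continuousOn fun s (hs : s ∈ Set.Ici 0) => hvr s hs
  have hgl : ContinuousOn (fun s => vl s ⬝ᵥ fl s) (Set.Ici 0) := by fun_prop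
  have hgr : ContinuousOn (fun s => vr s ⬝ᵥ fr s) (Set.Ici 0) := by fun_prop
  have hpassive : ∀ t, 0 ≤ t → ∫ s in (0 : ℝ)..t, (vl s ⬝ᵥ fl s + vr s ⬝ᵥ fr s) ≤ κl + κr := by
    intro t ht
    rw [intervalIntegral.integral_add
      ((hgl.mono Set.Icc_subset_Ici_self).intervalIntegrable_of_Icc ht)
      ((hgr.mono Set.Icc_subset_Ici_self).intervalIntegrable_of_Icc ht)]
    exact add_le_add (hA1l t ht) (hA1r t ht)
  obtain ⟨B, hB⟩ := exists_norm_le_of_energy_le (ι := Fin n) (p := pU) hm1 (by linarith) hKs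
    hKcl hKcr (E 0 + (κl + κr))
  exact ⟨B, fun t ht => hB _ _ _ _ _ _ _ (hMl_bnd (ql t) (vl t)).1 (hMr_bnd (qr t) (vr t)).1
    (le_add_of_hasDerivAt_le_of_integral_le hE_deriv (hgl.add hgr) hpassive ht)⟩

/-- Proposition 2, Conclusion A: boundedness of the position error, velocities and
controller errors for the output-feedback P+d controller C2 under passive forces. -/
theorem stmt9 (n : ℕ)
    (Ml Mr : (Fin n → ℝ) → Matrix (Fin n) (Fin n) ℝ)
    (Cl Cr : (Fin n → ℝ) → (Fin n → ℝ) → Matrix (Fin n) (Fin n) ℝ)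
    -- Assumption A2
    (m1 m2 : ℝ) (hm1 : 0 < m1) (hm12 : m1 ≤ m2)
    (hMl_diff : ∀ a b : Fin n, ContDiff ℝ 1 fun q => Ml q a b)
    (hMr_diff : ∀ a b : Fin n, ContDiff ℝ 1 fun q => Mr q a b)
    (hMl_symm : ∀ q, (Ml q)ᵀ = Ml q) (hMr_symm : ∀ q, (Mr q)ᵀ = Mr q)
    (hMl_bnd : ∀ q x : Fin n → ℝ,
      m1 * (x ⬝ᵥ x) ≤ x ⬝ᵥ (Ml q *ᵥ x) ∧ x ⬝ᵥ (Ml q *ᵥ x) ≤ m2 * (x ⬝ᵥ x))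
    (hMr_bnd : ∀ q x : Fin n → ℝ,
      m1 * (x ⬝ᵥ x) ≤ x ⬝ᵥ (Mr q *ᵥ x) ∧ x ⬝ᵥ (Mr q *ᵥ x) ≤ m2 * (x ⬝ᵥ x))
    (hCl_cont : Continuous fun p : (Fin n → ℝ) × (Fin n → ℝ) => Cl p.1 p.2)
    (hCr_cont : Continuous fun p : (Fin n → ℝ) × (Fin n → ℝ) => Cr p.1 p.2)
    -- Property P3
    (hP3l : ∀ q v : Fin n → ℝ, ∀ a b : Fin n,
      ((∑ k, v k * fderiv ℝ (fun q' => Ml q' a b) q (Pi.single k 1)) - 2 * Cl q v a b)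
        = -((∑ k, v k * fderiv ℝ (fun q' => Ml q' b a) q (Pi.single k 1)) - 2 * Cl q v b a))
    (hP3r : ∀ q v : Fin n → ℝ, ∀ a b : Fin n,
      ((∑ k, v k * fderiv ℝ (fun q' => Mr q' a b) q (Pi.single k 1)) - 2 * Cr q v a b)
        = -((∑ k, v k * fderiv ℝ (fun q' => Mr q' b a) q (Pi.single k 1)) - 2 * Cr q v b a))
    -- homogeneity weights and control gains
    (r1 r2 : ℝ) (hr2 : 0 < r2) (hr12 : r2 < r1) (hr1 : r1 < 2 * r2)
    (pU pF : ℝ) (hpU : pU = (2 * r2 - r1) / r1) (hpF : pF = (2 * r2 - r1) / r2)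
    (Ks Kcl Kcr Dcl Dcr : ℝ) (hKs : 0 < Ks)
    (hKcl : 0 < Kcl) (hKcr : 0 < Kcr) (hDcl : 0 < Dcl) (hDcr : 0 < Dcr)
    -- a solution on [0,∞)
    (ql qr vl vr al ar θl θr : ℝ → (Fin n → ℝ))
    (hql : ∀ t : ℝ, 0 ≤ t → HasDerivAt ql (vl t) t)
    (hqr : ∀ t : ℝ, 0 ≤ t → HasDerivAt qr (vr t) t)
    (hvl : ∀ t : ℝ, 0 ≤ t → HasDerivAt vl (al t) t)
    (hvr : ∀ t : ℝ, 0 ≤ t → HasDerivAt vr (ar t) t)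
    (hal : ContinuousOn al (Set.Ici 0)) (har : ContinuousOn ar (Set.Ici 0))
    -- controller error dynamics
    (hθl : ∀ t : ℝ, 0 ≤ t → HasDerivAt θl
      (fun k => -((Kcl / Dcl) ^ (1 / pF) * spow (r2 / r1) (θl t k)) - vl t k) t)
    (hθr : ∀ t : ℝ, 0 ≤ t → HasDerivAt θr
      (fun k => -((Kcr / Dcr) ^ (1 / pF) * spow (r2 / r1) (θr t k)) - vr t k) t)
    -- continuous external forces satisfying Assumption A1 along the solution
    (fl fr : ℝ → (Fin n → ℝ)) (hfl : Continuous fl) (hfr : Continuous fr)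
    (κl κr : ℝ) (hκl : 0 < κl) (hκr : 0 < κr)
    (hA1l : ∀ t : ℝ, 0 ≤ t → (∫ σ in (0:ℝ)..t, vl σ ⬝ᵥ fl σ) ≤ κl)
    (hA1r : ∀ t : ℝ, 0 ≤ t → (∫ σ in (0:ℝ)..t, vr σ ⬝ᵥ fr σ) ≤ κr)
    -- the closed-loop equations
    (heql : ∀ t : ℝ, 0 ≤ t →
      Ml (ql t) *ᵥ al t + Cl (ql t) (vl t) *ᵥ vl t
        = fun k => fl t k - Ks * spow pU (ql t k - qr t k) + Kcl * spow pU (θl t k))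
    (heqr : ∀ t : ℝ, 0 ≤ t →
      Mr (qr t) *ᵥ ar t + Cr (qr t) (vr t) *ᵥ vr t
        = fun k => fr t k - Ks * spow pU (qr t k - ql t k) + Kcr * spow pU (θr t k)) :
    ∃ B : ℝ, ∀ t : ℝ, 0 ≤ t →
      ‖ql t - qr t‖ ≤ B ∧ ‖vl t‖ ≤ B ∧ ‖vr t‖ ≤ B ∧ ‖θl t‖ ≤ B ∧ ‖θr t‖ ≤ B :=
  stmt9_general n Ml Mr Cl Cr m1 m2 hm1 hMl_diff hMr_diff hMl_symm hMr_symm hMl_bnd hMr_bnd hP3l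
    hP3r r1 r2 hr2 hr12 hr1 pU pF hpU Ks Kcl Kcr Dcl Dcr hKs hKcl hKcr hDcl hDcr ql qr vl vr al ar
    θl θr hql hqr hvl hvr hθl hθr fl fr hfl hfr κl κr hA1l hA1r heql heqr
end

section
/- Let A_l, A_r ∈ ℝ^{n×n} be fixed matrices, K_s, K_{cl}, K_{cr} > 0, c_l, c_r > 0, and let the weights satisfy 2r₂ > r₁ > r₂ > 0 with p_U := (2r₂−r₁)/r₁. Then the vector field G on ℝ^{6n} defined by G(q̃_l, q̃_r, v_l, v_r, θ̃_l, θ̃_r) = ( v_l, v_r, −A_l (K_s ⌈q̃_l − q̃_r⌋^{p_U} − K_{cl} ⌈θ̃_l⌋^{p_U}), −A_r (K_s ⌈q̃_r − q̃_l⌋^{p_U} − K_{cr} ⌈θ̃_r⌋^{p_U}), −c_l ⌈θ̃_l⌋^{r₂/r₁} − v_l, −c_r ⌈θ̃_r⌋^{r₂/r₁} − v_r ) is r-homogeneous of degree r₂ − r₁ < 0, where the weight of every component of q̃_l, q̃_r, θ̃_l, θ̃_r is r₁ and the weight of every component of v_l, v_r is r₂. -/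
open Matrix

/-- Abbreviation for the state space `ℝ^{6n}` split into six blocks
`(q̃l, q̃r, vl, vr, θ̃l, θ̃r)`. -/
abbrev V6 (n : ℕ) :=
  (Fin n → ℝ) × (Fin n → ℝ) × (Fin n → ℝ) × (Fin n → ℝ) × (Fin n → ℝ) × (Fin n → ℝ)

/-- The dilation on `ℝ^{6n}` giving weight `r1` to `q̃l, q̃r, θ̃l, θ̃r` and weight
`r2` to `vl, vr`. -/
noncomputable def dil6 (n : ℕ) (r1 r2 ε : ℝ) (x : V6 n) : V6 n :=
  (ε ^ r1 • x.1, ε ^ r1 • x.2.1, ε ^ r2 • x.2.2.1, ε ^ r2 • x.2.2.2.1,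
   ε ^ r1 • x.2.2.2.2.1, ε ^ r1 • x.2.2.2.2.2)

/-- The homogeneous part of the closed loop obtained with the output-feedback
P+d controller C2. -/
noncomputable def GC2 (n : ℕ) (Al Ar : Matrix (Fin n) (Fin n) ℝ)
    (Ks Kcl Kcr cl cr pU r1 r2 : ℝ) (x : V6 n) : V6 n :=
  (x.2.2.1, x.2.2.2.1,
   -(Al *ᵥ fun k => Ks * spow pU (x.1 k - x.2.1 k) - Kcl * spow pU (x.2.2.2.2.1 k)),
   -(Ar *ᵥ fun k => Ks * spow pU (x.2.1 k - x.1 k) - Kcr * spow pU (x.2.2.2.2.2 k)),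
   fun k => -(cl * spow (r2 / r1) (x.2.2.2.2.1 k)) - x.2.2.1 k,
   fun k => -(cr * spow (r2 / r1) (x.2.2.2.2.2 k)) - x.2.2.2.1 k)

lemma spow_smul' (p c x : ℝ) (hc : 0 < c) : spow p (c * x) = c ^ p * spow p x := by
  unfold spow
  rcases lt_trichotomy x 0 with h|h|h
  · rw [Real.sign_of_neg h, Real.sign_of_neg (mul_neg_of_pos_of_neg hc h), abs_mul,
      abs_of_pos hc, Real.mul_rpow hc.le (abs_nonneg x)]
    ring
  · simp [h]
  · rw [Real.sign_of_pos h, Real.sign_of_pos (mul_pos hc h), abs_mul,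
      abs_of_pos hc, Real.mul_rpow hc.le (abs_nonneg x)]
    ring

theorem stmt17 (n : ℕ) (Al Ar : Matrix (Fin n) (Fin n) ℝ)
    (Ks Kcl Kcr cl cr : ℝ) (hKs : 0 < Ks) (hKcl : 0 < Kcl) (hKcr : 0 < Kcr)
    (hcl : 0 < cl) (hcr : 0 < cr)
    (r1 r2 : ℝ) (hr2 : 0 < r2) (hr12 : r2 < r1) (hr1 : r1 < 2 * r2)
    (pU : ℝ) (hpU : pU = (2 * r2 - r1) / r1) :
    r2 - r1 < 0 ∧
    ∀ ε : ℝ, 0 < ε → ∀ x : V6 n,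
      GC2 n Al Ar Ks Kcl Kcr cl cr pU r1 r2 (dil6 n r1 r2 ε x)
        = dil6 n r1 r2 ε (ε ^ (r2 - r1) • GC2 n Al Ar Ks Kcl Kcr cl cr pU r1 r2 x) := by
  have hr1pos : 0 < r1 := hr2.trans hr12
  refine ⟨by linarith, ?_⟩
  intro ε hε x
  obtain ⟨ql, qr, vl, vr, tl, tr⟩ := x
  have hε1 : (0:ℝ) < ε ^ r1 := Real.rpow_pos_of_pos hε r1
  have key : ∀ a b : ℝ, ε ^ a * ε ^ b = ε ^ (a + b) := fun a b => (Real.rpow_add hε a b).symm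
  have keyp : (ε ^ r1) ^ pU = ε ^ r2 * ε ^ (r2 - r1) := by
    rw [← Real.rpow_mul hε.le, key]
    congr 1
    rw [hpU]
    field_simp
    ring
  have keyr : (ε ^ r1) ^ (r2 / r1) = ε ^ r2 := by
    rw [← Real.rpow_mul hε.le]
    congr 1
    field_simp
  have keyv : ε ^ r1 * ε ^ (r2 - r1) = ε ^ r2 := by rw [key]; ring_nf
  refine Prod.ext ?_ (Prod.ext ?_ (Prod.ext ?_ (Prod.ext ?_ (Prod.ext ?_ ?_))))
  · funext k
    simp only [GC2, dil6, Prod.smul_mk, Pi.smul_apply, smul_eq_mul]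
    rw [← mul_assoc, keyv]
  · funext k
    simp only [GC2, dil6, Prod.smul_mk, Pi.smul_apply, smul_eq_mul]
    rw [← mul_assoc, keyv]
  · funext k
    simp only [GC2, dil6, Prod.smul_mk, Pi.smul_apply, smul_eq_mul, Pi.neg_apply,
      Matrix.mulVec, dotProduct]
    rw [neg_eq_iff_eq_neg]
    simp only [mul_neg, neg_neg, ← mul_assoc, Finset.mul_sum]
    refine Finset.sum_congr rfl fun j _ => ?_
    have h1 : ε ^ r1 * ql j - ε ^ r1 * qr j = ε ^ r1 * (ql j - qr j) := by ring
    rw [h1, spow_smul' _ _ _ hε1, spow_smul' _ _ _ hε1]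
    linear_combination (Al k j * (Ks * spow pU (ql j - qr j) - Kcl * spow pU (tl j))) * keyp
  · funext k
    simp only [GC2, dil6, Prod.smul_mk, Pi.smul_apply, smul_eq_mul, Pi.neg_apply,
      Matrix.mulVec, dotProduct]
    rw [neg_eq_iff_eq_neg]
    simp only [mul_neg, neg_neg, ← mul_assoc, Finset.mul_sum]
    refine Finset.sum_congr rfl fun j _ => ?_
    have h1 : ε ^ r1 * qr j - ε ^ r1 * ql j = ε ^ r1 * (qr j - ql j) := by ring
    rw [h1, spow_smul' _ _ _ hε1, spow_smul' _ _ _ hε1]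
    linear_combination (Ar k j * (Ks * spow pU (qr j - ql j) - Kcr * spow pU (tr j))) * keyp
  · funext k
    simp only [GC2, dil6, Prod.smul_mk, Pi.smul_apply, smul_eq_mul]
    rw [spow_smul' _ _ _ hε1, keyr]
    linear_combination (cl * spow (r2 / r1) (tl k) + vl k) * keyv
  · funext k
    simp only [GC2, dil6, Prod.smul_mk, Pi.smul_apply, smul_eq_mul]
    rw [spow_smul' _ _ _ hε1, keyr]
    linear_combination (cr * spow (r2 / r1) (tr k) + vr k) * keyv
end
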